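/- arXiv:2604.17339 — 2 statements merged into one kernel-verified Lean document; each statement's English description precedes it below -/
import Mathlib

section
/- Trivial-syndrome case of the proof of Theorem 2: let m ≥ 5. For every fault pattern F with w(F) ≤ 2 whose observed syndrome is zero (s(F) = 0), the data error satisfies wt(e(F)) ≤ w(F); hence applying no correction is safe when no cat stabilizer is triggered. -/
open scoped Classical

namespace CutCat

/-- A fault in the cut-cat single-round fault model, located at cat qubit `r`. -/
inductive Fault (m : ℕ) where
  | pre  (r : ZMod m)
  | mid  (r : ZMod m)
  | post (r : ZMod m)
  | meas (r : ZMod m)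

variable {m : ℕ}

/-- The index (in `ZMod (2*m)`) of the data qubit `2r` coupled to cat qubit `r`. -/
def d0 (r : ZMod m) : ZMod (2 * m) := 2 * (r.val : ZMod (2 * m))

/-- The data-qubit error contributed by a single fault. -/
def Fault.dataErr : Fault m → ZMod (2 * m) → ZMod 2
  | .pre r  => fun q => (if q = d0 r then 1 else 0) + (if q = d0 r + 1 then 1 else 0)
  | .mid r  => fun q => if q = d0 r + 1 then 1 else 0
  | .post _ => 0
  | .meas _ => 0

/-- The cat-stabilizer syndrome contribution of a single fault
    (syndrome bit `j` checks cat qubits `j` and `j+1`). -/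
def Fault.syn : Fault m → ZMod m → ZMod 2
  | .pre r  => fun j => (if j = r - 1 then 1 else 0) + (if j = r then 1 else 0)
  | .mid r  => fun j => (if j = r - 1 then 1 else 0) + (if j = r then 1 else 0)
  | .post r => fun j => (if j = r - 1 then 1 else 0) + (if j = r then 1 else 0)
  | .meas r => fun j => if j = r then 1 else 0

/-- The data error `e(F)` of a fault pattern `F` (coordinatewise mod-2 sum). -/
def dataErr (F : Multiset (Fault m)) : ZMod (2 * m) → ZMod 2 :=
  (F.map Fault.dataErr).sum

/-- The observed syndrome `s(F)` of a fault pattern `F` (coordinatewise mod-2 sum). -/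
def synd (F : Multiset (Fault m)) : ZMod m → ZMod 2 :=
  (F.map Fault.syn).sum

/-- Hamming weight of a binary vector. -/
noncomputable def wt {n : ℕ} (f : ZMod n → ZMod 2) : ℕ := {i | f i ≠ 0}.ncard

/-- The set of triggered syndrome bits, `supp s(F)`. -/
def suppSyn (F : Multiset (Fault m)) : Set (ZMod m) := {j | synd F j = 1}

/-- Boundary of a set of cat qubits: checks `j` with exactly one of `j`, `j+1` in `E`. -/
def boundary (E : Set (ZMod m)) : Set (ZMod m) := {j | Xor' (j ∈ E) (j + 1 ∈ E)}

/-- Indicator (as a binary data vector) of the set `{2r+1 : r ∈ E}`. -/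
noncomputable def indicOdd (E : Set (ZMod m)) : ZMod (2 * m) → ZMod 2 :=
  fun q => if ∃ r ∈ E, q = d0 r + 1 then 1 else 0

/-- Indicator of a single data position `j`. -/
def indic {n : ℕ} (j : ZMod n) : ZMod n → ZMod 2 := fun q => if q = j then 1 else 0

/-- `c` is the correction output by the minimum-weight decoder with parameter `t`
    on syndrome `s(F)`: if there is a set `E` of at most `t` cat qubits whose
    boundary equals `supp s(F)`, then `c` is the indicator of `{2r+1 : r ∈ E}`;
    otherwise `c = 0`. -/
def IsDecoderCorrection (t : ℕ) (F : Multiset (Fault m)) (c : ZMod (2 * m) → ZMod 2) : Prop :=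
  (∃ E : Set (ZMod m), E.ncard ≤ t ∧ boundary E = suppSyn F ∧ c = indicOdd E) ∨
  ((¬ ∃ E : Set (ZMod m), E.ncard ≤ t ∧ boundary E = suppSyn F) ∧ c = 0)

/-- `true` iff the fault is a measurement fault. -/
def Fault.isMeas : Fault m → Bool
  | .meas _ => true
  | _ => false

end CutCat


/-!
A single fault always triggers a syndrome bit, so a silent pattern of weight at most two is
empty or a pair of faults with cancelling syndromes. A measurement fault flips one bit and every
other fault flips both bits `r - 1, r` of an "edge", so a cancelling pair is either two
measurement faults, which leave no data error, or two edge faults. For `m ≥ 3` the edge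
determines `r`, so both faults sit at the same cat qubit and their data errors lie in
`{2r, 2r + 1}`.
-/

namespace CutCat

open Function

variable {m : ℕ}

lemma sub_one_ne_self (hm : 2 ≤ m) (r : ZMod m) : r - 1 ≠ r := by
  have : Fact (1 < m) := ⟨hm⟩
  simp

lemma sub_one_ne_add_one (hm : 3 ≤ m) (r : ZMod m) : r - 1 ≠ r + 1 := by
  have : NeZero m := ⟨by omega⟩
  intro h
  have h2 : ((2 : ℕ) : ZMod m) = 0 := by push_cast; linear_combination -h
  have := Nat.le_of_dvd two_pos ((ZMod.natCast_eq_zero_iff 2 m).mp h2)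
  omega

@[simp] lemma indic_self {n : ℕ} (j : ZMod n) : indic j j = 1 := if_pos rfl

@[simp] lemma indic_of_ne {n : ℕ} {j q : ZMod n} (h : q ≠ j) : indic j q = 0 := if_neg h

-- the syndrome of an X error on cat qubit `r`
def edgeSyn (r : ZMod m) : ZMod m → ZMod 2 := indic (r - 1) + indic r

lemma indic_add_edgeSyn_ne_zero (hm : 2 ≤ m) (s r : ZMod m) : indic s + edgeSyn r ≠ 0 := by
  intro h
  by_cases hs : s = r
  · have := congrFun h (r - 1)
    simp [edgeSyn, hs, sub_one_ne_self hm] at this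
  · have := congrFun h r
    simp [edgeSyn, Ne.symm hs, (sub_one_ne_self hm r).symm] at this

lemma eq_of_edgeSyn_add_edgeSyn_eq_zero (hm : 3 ≤ m) {r s : ZMod m}
    (h : edgeSyn r + edgeSyn s = 0) : r = s := by
  by_contra hne
  have hr := congrFun h r
  have hs : s = r + 1 := by
    by_contra hs
    have : r ≠ s - 1 := fun h' => hs (by rw [h']; ring)
    simp [edgeSyn, (sub_one_ne_self (by omega) r).symm, hne, this] at hr
  have := congrFun h (r - 1)
  simp [edgeSyn, hs, sub_one_ne_self (by omega) r, sub_one_ne_add_one hm r] at this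

lemma wt_zero {n : ℕ} : wt (0 : ZMod n → ZMod 2) = 0 := by simp [wt]

lemma wt_le_two_of_support_subset {n : ℕ} {f : ZMod n → ZMod 2} {a b : ZMod n}
    (h : support f ⊆ {a, b}) : wt f ≤ 2 :=
  calc wt f ≤ ({a, b} : Set (ZMod n)).ncard := Set.ncard_le_ncard h
    _ ≤ ({b} : Set (ZMod n)).ncard + 1 := Set.ncard_insert_le a _
    _ = 2 := by rw [Set.ncard_singleton]

def Fault.loc : Fault m → ZMod m
  | .pre r | .mid r | .post r | .meas r => r

lemma Fault.support_dataErr_subset (f : Fault m) :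
    support f.dataErr ⊆ {d0 f.loc, d0 f.loc + 1} := by
  intro q hq
  cases f <;> (by_contra hne; simp_all [Fault.dataErr, Fault.loc])

lemma Fault.dataErr_eq_zero_of_isMeas {f : Fault m} (h : f.isMeas) : f.dataErr = 0 := by
  cases f <;> simp_all [Fault.isMeas, Fault.dataErr]

lemma Fault.syn_of_isMeas {f : Fault m} (h : f.isMeas) : f.syn = indic f.loc := by
  cases f <;> first | rfl | simp [Fault.isMeas] at h

lemma Fault.syn_of_not_isMeas {f : Fault m} (h : ¬ f.isMeas) :
    f.syn = edgeSyn f.loc := by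
  cases f <;> first | rfl | simp [Fault.isMeas] at h

lemma Fault.syn_ne_zero (hm : 2 ≤ m) (f : Fault m) : f.syn ≠ 0 := by
  intro h
  have := congrFun h f.loc
  by_cases hf : f.isMeas
  · simp [Fault.syn_of_isMeas hf] at this
  · simp [Fault.syn_of_not_isMeas hf, edgeSyn, (sub_one_ne_self hm _).symm] at this

lemma Fault.isMeas_eq_of_syn_add_eq_zero (hm : 2 ≤ m) {f g : Fault m}
    (h : f.syn + g.syn = 0) : f.isMeas = g.isMeas := by
  cases hf : f.isMeas <;> cases hg : g.isMeas
  · rfl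
  · rw [Fault.syn_of_not_isMeas (by simp [hf]), Fault.syn_of_isMeas hg, add_comm] at h
    exact absurd h (indic_add_edgeSyn_ne_zero hm _ _)
  · rw [Fault.syn_of_isMeas hf, Fault.syn_of_not_isMeas (by simp [hg])] at h
    exact absurd h (indic_add_edgeSyn_ne_zero hm _ _)
  · rfl

lemma Fault.loc_eq_of_syn_add_eq_zero (hm : 3 ≤ m) {f g : Fault m} (hf : ¬ f.isMeas)
    (hg : ¬ g.isMeas) (h : f.syn + g.syn = 0) : f.loc = g.loc := by
  rw [Fault.syn_of_not_isMeas hf, Fault.syn_of_not_isMeas hg] at h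
  exact eq_of_edgeSyn_add_edgeSyn_eq_zero hm h

lemma Fault.wt_dataErr_add_le_two (hm : 3 ≤ m) {f g : Fault m} (h : f.syn + g.syn = 0) :
    wt (f.dataErr + g.dataErr) ≤ 2 := by
  by_cases hf : f.isMeas
  · have hg : g.isMeas := Fault.isMeas_eq_of_syn_add_eq_zero (by omega) h ▸ hf
    simp [Fault.dataErr_eq_zero_of_isMeas hf, Fault.dataErr_eq_zero_of_isMeas hg, wt_zero]
  · have hg : ¬ g.isMeas := Fault.isMeas_eq_of_syn_add_eq_zero (by omega) h ▸ hf
    have hloc := Fault.loc_eq_of_syn_add_eq_zero hm hf hg h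
    refine wt_le_two_of_support_subset (a := d0 f.loc) (b := d0 f.loc + 1)
      ((support_add _ _).trans (Set.union_subset f.support_dataErr_subset ?_))
    exact hloc ▸ g.support_dataErr_subset

end CutCat

/-- Trivial-syndrome case of the proof of Theorem 2: if `w(F) ≤ 2` and the
observed syndrome is zero, then `wt(e(F)) ≤ w(F)`, so no correction is needed. -/
theorem cutcat_d5_trivial_syndrome (m : ℕ) (hm : 5 ≤ m)
    (F : Multiset (CutCat.Fault m)) (hF : Multiset.card F ≤ 2)
    (hs : CutCat.synd F = 0) :
    CutCat.wt (CutCat.dataErr F) ≤ Multiset.card F := by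
  open CutCat in
  obtain h | h | h : Multiset.card F = 0 ∨ Multiset.card F = 1 ∨ Multiset.card F = 2 := by omega
  · simp [Multiset.card_eq_zero.mp h, dataErr, wt_zero]
  · obtain ⟨f, rfl⟩ := Multiset.card_eq_one.mp h
    exact absurd (by simpa [synd] using hs) (f.syn_ne_zero (by omega))
  · obtain ⟨f, g, rfl⟩ := Multiset.card_eq_two.mp h
    rw [h]
    simpa [dataErr] using Fault.wt_dataErr_add_le_two (by omega) (by simpa [synd] using hs)
end

section
/- Single-triggered-stabilizer case of the proof of Theorem 2: let m ≥ 5. For every fault pattern F with w(F) ≤ 2 whose observed syndrome has exactly one triggered bit (|supp s(F)| = 1), the data error satisfies wt(e(F)) ≤ w(F); hence applying no correction is safe when a single cat stabilizer is triggered. -/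
/-!
Every fault except a measurement fault flips an even number of syndrome bits, so the number
of triggered bits has the parity of the number of measurement faults. A single triggered bit
therefore forces at least one measurement fault, which has no data error; with `w(F) ≤ 2` at
most one other fault remains, and it flips at most two data bits.
-/

open scoped Classical

namespace CutCat

variable {m : ℕ}

lemma wt_add_le {n : ℕ} [NeZero n] (f g : ZMod n → ZMod 2) : wt (f + g) ≤ wt f + wt g :=
  (Set.ncard_le_ncard (Function.support_add f g) (Set.toFinite _)).trans
    (Set.ncard_union_le _ _)

@[simp]
lemma dataErr_cons (f : Fault m) (F : Multiset (Fault m)) :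
    dataErr (f ::ₘ F) = f.dataErr + dataErr F := by
  simp [dataErr]

@[simp]
lemma synd_cons (f : Fault m) (F : Multiset (Fault m)) :
    synd (f ::ₘ F) = f.syn + synd F := by
  simp [synd]

lemma Fault.wt_dataErr_le (f : Fault m) : wt f.dataErr ≤ if f.isMeas then 0 else 2 := by
  cases f with
  | pre r =>
    have hsupp : {q | Fault.dataErr (.pre r : Fault m) q ≠ 0} ⊆ {d0 r, d0 r + 1} := by
      intro q hq
      by_contra hq'
      simp_all [Fault.dataErr]
    exact (Set.ncard_le_ncard hsupp (Set.toFinite _)).trans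
      ((Set.ncard_insert_le _ _).trans (by simp [Fault.isMeas]))
  | mid r =>
    have hsupp : {q | Fault.dataErr (.mid r : Fault m) q ≠ 0} ⊆ {d0 r + 1} := by
      intro q hq
      by_contra hq'
      simp_all [Fault.dataErr]
    exact (Set.ncard_le_ncard hsupp (Set.toFinite _)).trans (by simp [Fault.isMeas])
  | post r => simp [wt, Fault.dataErr, Fault.isMeas]
  | meas r => simp [wt, Fault.dataErr, Fault.isMeas]

lemma wt_dataErr_le [NeZero m] (F : Multiset (Fault m)) :
    wt (dataErr F) ≤ 2 * Multiset.card (F.filter fun f => ¬ f.isMeas) := by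
  have : NeZero (2 * m) := ⟨by simp [NeZero.ne m]⟩
  induction F using Multiset.induction_on with
  | empty => simp [dataErr, wt]
  | cons f F ih =>
    calc wt (dataErr (f ::ₘ F))
        ≤ wt f.dataErr + wt (dataErr F) := by rw [dataErr_cons]; exact wt_add_le _ _
      _ ≤ (if f.isMeas then 0 else 2) + 2 * Multiset.card (F.filter fun f => ¬ f.isMeas) :=
          add_le_add f.wt_dataErr_le ih
      _ = 2 * Multiset.card ((f ::ₘ F).filter fun f => ¬ f.isMeas) := by
          rw [Multiset.filter_cons]
          split_ifs <;> simp_all [mul_add, add_comm]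

lemma Fault.sum_syn [NeZero m] (f : Fault m) :
    ∑ j, f.syn j = if f.isMeas then 1 else 0 := by
  cases f <;> simp [Fault.syn, Fault.isMeas, Finset.sum_add_distrib] <;> decide

lemma sum_synd [NeZero m] (F : Multiset (Fault m)) :
    ∑ j, synd F j = Multiset.card (F.filter fun f => f.isMeas) := by
  induction F using Multiset.induction_on with
  | empty => simp [synd]
  | cons f F ih =>
    simp only [synd_cons, Pi.add_apply, Finset.sum_add_distrib, ih, f.sum_syn,
      Multiset.filter_cons]
    split_ifs <;> simp [add_comm]

lemma ncard_suppSyn_cast [NeZero m] (F : Multiset (Fault m)) :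
    ((suppSyn F).ncard : ZMod 2) = ∑ j, synd F j := by
  have hsupp : suppSyn F = ↑(Finset.univ.filter fun j => synd F j = 1) := by
    ext j; simp [suppSyn]
  rw [hsupp, Set.ncard_coe_finset, ← Finset.sum_boole]
  exact Finset.sum_congr rfl fun j _ => by generalize synd F j = x; revert x; decide

lemma odd_card_filter_isMeas_iff [NeZero m] (F : Multiset (Fault m)) :
    Odd (Multiset.card (F.filter fun f => f.isMeas)) ↔ Odd (suppSyn F).ncard := by
  rw [← ZMod.natCast_eq_one_iff_odd, ← ZMod.natCast_eq_one_iff_odd, ncard_suppSyn_cast,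
    sum_synd]

end CutCat

/-- Single-triggered-stabilizer case of the proof of Theorem 2: if `w(F) ≤ 2`
and exactly one cat stabilizer is triggered, then `wt(e(F)) ≤ w(F)`,
so no correction is needed. -/
theorem cutcat_d5_single_triggered (m : ℕ) (hm : 5 ≤ m)
    (F : Multiset (CutCat.Fault m)) (hF : Multiset.card F ≤ 2)
    (hs : (CutCat.suppSyn F).ncard = 1) :
    CutCat.wt (CutCat.dataErr F) ≤ Multiset.card F := by
  have : NeZero m := ⟨by omega⟩
  have hmeas : Odd (Multiset.card (F.filter fun f => f.isMeas)) := by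
    rw [CutCat.odd_card_filter_isMeas_iff, hs]
    exact odd_one
  have hsplit := congrArg Multiset.card (Multiset.filter_add_not (fun f => f.isMeas) F)
  rw [Multiset.card_add] at hsplit
  have hwt := CutCat.wt_dataErr_le F
  have := hmeas.pos
  omega
end
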